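/- arXiv:1803.06977 — 2 statements merged into one kernel-verified Lean document; each statement's English description precedes it below -/
import Mathlib

section
/- Any exact h-hopset H of the unweighted path P_n with vertices 1, …, n induces an h-covering of [1,n]: the family of intervals I = { [min(u,v), max(u,v)] : {u,v} ∈ E(P_n) ∪ H } has the property that every interval [i,j] ⊆ [1,n] is the union of at most h intervals from I. -/
open scoped ENNReal

noncomputable section

open Classical in
/-- `dLim w h u v` : minimum total weight of a `u`-`v` walk using at most `h` edges,
where `w x y` is the weight of edge `{x,y}` (`⊤` if absent). -/
def dLim {V : Type*} (w : V → V → ℝ≥0∞) : ℕ → V → V → ℝ≥0∞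
  | 0, u, v => if u = v then (0 : ℝ≥0∞) else ⊤
  | h + 1, u, v => min (dLim w h u v) (⨅ x : V, w u x + dLim w h x v)

/-- Ordinary shortest-path distance: infimum over all hop bounds. -/
def gdist {V : Type*} (w : V → V → ℝ≥0∞) (u v : V) : ℝ≥0∞ :=
  ⨅ h : ℕ, dLim w h u v

open Classical in
/-- Edge weights of the augmented graph `G ∪ H`: a shortcut pair of `H` gets
weight `d_G(u,v)`, other pairs keep their original weight. -/
def wAug {V : Type*} (w : V → V → ℝ≥0∞) (H : V → V → Prop) (u v : V) : ℝ≥0∞ :=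
  if H u v then min (w u v) (gdist w u v) else w u v

/-- `H` is an exact `h`-hopset for the graph with weights `w`. -/
def IsHopset {V : Type*} (w : V → V → ℝ≥0∞) (H : V → V → Prop) (h : ℕ) : Prop :=
  ∀ u v : V, dLim (wAug w H) h u v = gdist w u v

/-- Walk extraction from bounded-hop distance. -/
lemma extract_walk {V : Type*} [Fintype V] (w : V → V → ℝ≥0∞) :
    ∀ h (u v : V), dLim w h u v ≠ ⊤ →
      ∃ l ≤ h, ∃ f : Fin (l+1) → V, f 0 = u ∧ f (Fin.last l) = v ∧
        (∑ k : Fin l, w (f k.castSucc) (f k.succ)) ≤ dLim w h u v := by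
  intro h
  induction h with
  | zero =>
    intro u v hne
    have huv : u = v := by
      by_contra hc
      simp [dLim, hc] at hne
    refine ⟨0, le_refl _, fun _ => u, rfl, huv, ?_⟩
    simp [dLim, huv]
  | succ h IH =>
    intro u v hne
    have hNE : Nonempty V := ⟨u⟩
    rcases le_total (dLim w h u v) (⨅ x : V, w u x + dLim w h x v) with hle | hle
    · have heq : dLim w (h+1) u v = dLim w h u v := min_eq_left hle
      rw [heq] at hne ⊢
      obtain ⟨l, hl, f, h0, hlast, hsum⟩ := IH u v hne
      exact ⟨l, hl.trans (Nat.le_succ h), f, h0, hlast, hsum⟩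
    · have heq : dLim w (h+1) u v = ⨅ x : V, w u x + dLim w h x v := min_eq_right hle
      obtain ⟨x, hx⟩ := Finite.exists_min (fun x : V => w u x + dLim w h x v)
      have hB : (⨅ x : V, w u x + dLim w h x v) = w u x + dLim w h x v :=
        le_antisymm (iInf_le _ x) (le_iInf hx)
      rw [heq, hB] at hne ⊢
      have hw : w u x ≠ ⊤ := fun hc => hne (by simp [hc])
      have hd : dLim w h x v ≠ ⊤ := fun hc => hne (by simp [hc])
      obtain ⟨l, hl, f, h0, hlast, hsum⟩ := IH x v hd
      refine ⟨l + 1, Nat.succ_le_succ hl, Fin.cons u f, Fin.cons_zero _ _, ?_, ?_⟩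
      · have hls : (Fin.last (l+1)) = (Fin.last l).succ := rfl
        rw [hls, Fin.cons_succ]; exact hlast
      · rw [Fin.sum_univ_succ]
        have e0 : (Fin.cons u f : Fin (l+2) → V) ((0 : Fin (l+1)).castSucc) = u := by
          simp
        have e1 : (Fin.cons u f : Fin (l+2) → V) ((0 : Fin (l+1)).succ) = f 0 := by
          rw [Fin.cons_succ]
        rw [e0, e1, h0]
        have hrest : ∑ k : Fin l,
            w ((Fin.cons u f : Fin (l+2) → V) k.succ.castSucc)
              ((Fin.cons u f : Fin (l+2) → V) k.succ.succ)
            = ∑ k : Fin l, w (f k.castSucc) (f k.succ) := by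
          apply Finset.sum_congr rfl
          intro k _
          rw [← Fin.succ_castSucc, Fin.cons_succ, Fin.cons_succ]
        rw [hrest]
        exact add_le_add le_rfl hsum

/-- General lower bound on `dLim` from a ℕ-valued "metric" below `w`. -/
lemma dLim_lower {V : Type*} (w : V → V → ℝ≥0∞) (D : V → V → ℕ)
    (h0 : ∀ u, D u u = 0) (htri : ∀ u x v, D u v ≤ D u x + D x v)
    (hw : ∀ u v, (D u v : ℝ≥0∞) ≤ w u v) :
    ∀ h u v, (D u v : ℝ≥0∞) ≤ dLim w h u v := by
  intro h
  induction h with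
  | zero =>
    intro u v
    by_cases huv : u = v
    · subst huv; simp [dLim, h0]
    · simp [dLim, huv]
  | succ h IH =>
    intro u v
    refine le_min (IH u v) (le_iInf fun x => ?_)
    calc (D u v : ℝ≥0∞) ≤ ((D u x + D x v : ℕ) : ℝ≥0∞) := by exact_mod_cast htri u x v
      _ = (D u x : ℝ≥0∞) + (D x v : ℝ≥0∞) := by push_cast; ring
      _ ≤ w u x + dLim w h x v := add_le_add (hw u x) (IH x v)

/-- Triangle-type lower bound along a walk, in ℕ. -/
lemma walk_sum_lower : ∀ (l : ℕ) (g : Fin (l+1) → ℕ),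
    max (g 0) (g (Fin.last l)) - min (g 0) (g (Fin.last l)) ≤
      ∑ k : Fin l, (max (g k.castSucc) (g k.succ) - min (g k.castSucc) (g k.succ)) := by
  intro l
  induction l with
  | zero => intro g; simp [Fin.last]
  | succ l IH =>
    intro g
    rw [Fin.sum_univ_castSucc]
    have hI := IH (g ∘ Fin.castSucc)
    have hterms : ∀ k : Fin l,
        (g ∘ Fin.castSucc) k.castSucc = g k.castSucc.castSucc ∧
        (g ∘ Fin.castSucc) k.succ = g k.castSucc.succ := by
      intro k
      constructor
      · rfl
      · show g k.succ.castSucc = g k.castSucc.succ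
        rw [← Fin.succ_castSucc]
    have hsum_eq : ∑ k : Fin l,
        (max ((g ∘ Fin.castSucc) k.castSucc) ((g ∘ Fin.castSucc) k.succ)
          - min ((g ∘ Fin.castSucc) k.castSucc) ((g ∘ Fin.castSucc) k.succ))
        = ∑ k : Fin l,
        (max (g k.castSucc.castSucc) (g k.castSucc.succ)
          - min (g k.castSucc.castSucc) (g k.castSucc.succ)) := by
      apply Finset.sum_congr rfl
      intro k _
      rw [(hterms k).1, (hterms k).2]
    rw [hsum_eq] at hI
    have h1 : (g ∘ Fin.castSucc) 0 = g 0 := rfl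
    have h2 : (g ∘ Fin.castSucc) (Fin.last l) = g (Fin.last l).castSucc := rfl
    rw [h1, h2] at hI
    have hlast : g (Fin.last (l+1)) = g (Fin.last l).succ := by
      rw [Fin.succ_last]
    have htri : max (g 0) (g (Fin.last (l+1))) - min (g 0) (g (Fin.last (l+1))) ≤
        (max (g 0) (g (Fin.last l).castSucc) - min (g 0) (g (Fin.last l).castSucc)) +
        (max (g (Fin.last l).castSucc) (g (Fin.last l).succ)
          - min (g (Fin.last l).castSucc) (g (Fin.last l).succ)) := by
      rw [hlast]; omega
    calc max (g 0) (g (Fin.last (l+1))) - min (g 0) (g (Fin.last (l+1)))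
        ≤ _ := htri
      _ ≤ (∑ k : Fin l,
            (max (g k.castSucc.castSucc) (g k.castSucc.succ)
              - min (g k.castSucc.castSucc) (g k.castSucc.succ)))
          + (max (g (Fin.last l).castSucc) (g (Fin.last l).succ)
              - min (g (Fin.last l).castSucc) (g (Fin.last l).succ)) :=
        add_le_add hI le_rfl

/-- Telescoping sum in ℤ. -/
lemma walk_telescope : ∀ (l : ℕ) (g : Fin (l+1) → ℤ),
    ∑ k : Fin l, (g k.succ - g k.castSucc) = g (Fin.last l) - g 0 := by
  intro l
  induction l with
  | zero => intro g; simp [Fin.last]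
  | succ l IH =>
    intro g
    rw [Fin.sum_univ_castSucc]
    have hI := IH (g ∘ Fin.castSucc)
    have hsum_eq : ∑ k : Fin l, ((g ∘ Fin.castSucc) k.succ - (g ∘ Fin.castSucc) k.castSucc)
        = ∑ k : Fin l, (g k.castSucc.succ - g k.castSucc.castSucc) := by
      apply Finset.sum_congr rfl
      intro k _
      have : (g ∘ Fin.castSucc) k.succ = g k.castSucc.succ := by
        show g k.succ.castSucc = g k.castSucc.succ
        rw [← Fin.succ_castSucc]
      rw [this]; rfl
    rw [hsum_eq] at hI
    have h2 : (g ∘ Fin.castSucc) (Fin.last l) = g (Fin.last l).castSucc := rfl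
    have h1 : (g ∘ Fin.castSucc) 0 = g 0 := rfl
    rw [h1, h2] at hI
    rw [hI]
    have hlast : g (Fin.last (l+1)) = g (Fin.last l).succ := by rw [Fin.succ_last]
    rw [hlast]
    ring

/-- Any exact `h`-hopset `H` of the unweighted path on `{0,…,n-1}` induces an
`h`-covering of intervals: every interval `[i,j]` is the concatenation of at most
`h` intervals whose endpoint pairs are edges of the path or members of `H`. -/
theorem stmt14 (n h : ℕ) (H : Fin n → Fin n → Prop) (hHsymm : ∀ u v, H u v ↔ H v u)
    (hH : ∀ u v : Fin n,
      dLim (wAug (fun i j : Fin n => if (i : ℕ) + 1 = (j : ℕ) ∨ (j : ℕ) + 1 = (i : ℕ)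
          then (1 : ℝ≥0∞) else ⊤) H) h u v
        = ((max (u : ℕ) (v : ℕ) - min (u : ℕ) (v : ℕ) : ℕ) : ℝ≥0∞)) :
    ∀ i j : Fin n, i ≤ j → ∃ l : ℕ, l ≤ h ∧ ∃ f : Fin (l + 1) → Fin n,
      Monotone f ∧ f 0 = i ∧ f (Fin.last l) = j ∧
      ∀ k : Fin l,
        f k.castSucc = f k.succ ∨ ((f k.castSucc : ℕ) + 1 = (f k.succ : ℕ)) ∨
          H (f k.castSucc) (f k.succ) := by
  intro i j hij
  set w : Fin n → Fin n → ℝ≥0∞ := fun i j : Fin n =>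
    if (i : ℕ) + 1 = (j : ℕ) ∨ (j : ℕ) + 1 = (i : ℕ) then (1 : ℝ≥0∞) else ⊤ with hw_def
  set w' : Fin n → Fin n → ℝ≥0∞ := wAug w H with hw'_def
  set D : Fin n → Fin n → ℕ := fun u v => max (u : ℕ) (v : ℕ) - min (u : ℕ) (v : ℕ) with hD_def
  -- lower bounds
  have hD0 : ∀ u : Fin n, D u u = 0 := by intro u; simp [hD_def]
  have hDtri : ∀ u x v : Fin n, D u v ≤ D u x + D x v := by
    intro u x v; simp only [hD_def]; omega
  have hwD : ∀ u v : Fin n, (D u v : ℝ≥0∞) ≤ w u v := by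
    intro u v
    simp only [hw_def]
    split_ifs with hcond
    · have : D u v = 1 := by simp only [hD_def]; omega
      rw [this]; simp
    · exact le_top
  have hw'D : ∀ u v : Fin n, (D u v : ℝ≥0∞) ≤ w' u v := by
    intro u v
    simp only [hw'_def, wAug]
    split_ifs with hH'
    · refine le_min (hwD u v) (le_iInf fun m => dLim_lower w D hD0 hDtri hwD m u v)
    · exact hwD u v
  -- extract walk
  have hfin : dLim w' h i j ≠ ⊤ := by
    rw [hH i j]; exact ENNReal.natCast_ne_top _
  obtain ⟨l, hl, f, hf0, hflast, hsum⟩ := extract_walk w' h i j hfin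
  rw [hH i j] at hsum
  -- each edge weight is finite
  have hedge_fin : ∀ k : Fin l, w' (f k.castSucc) (f k.succ) ≠ ⊤ := by
    intro k
    intro hc
    have : (∑ k : Fin l, w' (f k.castSucc) (f k.succ)) = ⊤ :=
      ENNReal.sum_eq_top.2 ⟨k, Finset.mem_univ k, hc⟩
    rw [this] at hsum
    exact (ENNReal.natCast_ne_top _) (top_le_iff.1 hsum)
  -- sum of D over edges equals D i j
  have hDsum_le : ∑ k : Fin l, D (f k.castSucc) (f k.succ) ≤ D i j := by
    have : ((∑ k : Fin l, D (f k.castSucc) (f k.succ) : ℕ) : ℝ≥0∞) ≤ (D i j : ℝ≥0∞) := by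
      push_cast
      calc ∑ k : Fin l, (D (f k.castSucc) (f k.succ) : ℝ≥0∞)
          ≤ ∑ k : Fin l, w' (f k.castSucc) (f k.succ) :=
            Finset.sum_le_sum fun k _ => hw'D _ _
        _ ≤ (D i j : ℝ≥0∞) := hsum
    exact_mod_cast this
  have hDsum_ge : D i j ≤ ∑ k : Fin l, D (f k.castSucc) (f k.succ) := by
    have := walk_sum_lower l (fun k => ((f k : ℕ)))
    simpa [hD_def, hf0, hflast] using this
  have hDsum : ∑ k : Fin l, D (f k.castSucc) (f k.succ) = D i j :=
    le_antisymm hDsum_le hDsum_ge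
  -- in ℤ: equality forces all steps forward
  have hstep : ∀ k : Fin l, (f k.castSucc : ℕ) ≤ (f k.succ : ℕ) := by
    have habs : ∀ u v : Fin n, (D u v : ℤ) = |((v : ℕ) : ℤ) - ((u : ℕ) : ℤ)| := by
      intro u v
      simp only [hD_def]
      rcases le_total (u : ℕ) (v : ℕ) with huv | huv
      · rw [abs_of_nonneg (by omega : (0:ℤ) ≤ ((v : ℕ) : ℤ) - ((u : ℕ) : ℤ))]
        omega
      · rw [abs_of_nonpos (by omega : ((v : ℕ) : ℤ) - ((u : ℕ) : ℤ) ≤ 0)]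
        omega
    have htel := walk_telescope l (fun k => (((f k : ℕ) : ℤ)))
    have hij' : (i : ℕ) ≤ (j : ℕ) := hij
    have hsum_abs : ∑ k : Fin l, |(((f k.succ : ℕ) : ℤ)) - (((f k.castSucc : ℕ) : ℤ))|
        = ∑ k : Fin l, ((((f k.succ : ℕ) : ℤ)) - (((f k.castSucc : ℕ) : ℤ))) := by
      have hL : ∑ k : Fin l, |(((f k.succ : ℕ) : ℤ)) - (((f k.castSucc : ℕ) : ℤ))| = (D i j : ℤ) := by
        calc ∑ k : Fin l, |(((f k.succ : ℕ) : ℤ)) - (((f k.castSucc : ℕ) : ℤ))|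
            = ∑ k : Fin l, ((D (f k.castSucc) (f k.succ) : ℤ)) := by
              apply Finset.sum_congr rfl; intro k _; rw [habs]
          _ = ((∑ k : Fin l, D (f k.castSucc) (f k.succ) : ℕ) : ℤ) := by push_cast; ring
          _ = (D i j : ℤ) := by rw [hDsum]
      have hR : ∑ k : Fin l, ((((f k.succ : ℕ) : ℤ)) - (((f k.castSucc : ℕ) : ℤ))) = (D i j : ℤ) := by
        rw [htel, hf0, hflast]
        simp only [hD_def]
        omega
      rw [hL, hR]
    intro k
    have hle : ∀ k ∈ Finset.univ (α := Fin l),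
        (((f k.succ : ℕ) : ℤ)) - (((f k.castSucc : ℕ) : ℤ)) ≤ |(((f k.succ : ℕ) : ℤ)) - (((f k.castSucc : ℕ) : ℤ))| :=
      fun k _ => le_abs_self _
    have := (Finset.sum_eq_sum_iff_of_le hle).1 hsum_abs.symm k (Finset.mem_univ k)
    have hnn : (0 : ℤ) ≤ (((f k.succ : ℕ) : ℤ)) - (((f k.castSucc : ℕ) : ℤ)) := by
      rw [this]; exact abs_nonneg _
    omega
  refine ⟨l, hl, f, ?_, hf0, hflast, ?_⟩
  · rw [Fin.monotone_iff_le_succ]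
    intro k
    exact Fin.le_def.2 (hstep k)
  · intro k
    have hfinw := hedge_fin k
    simp only [hw'_def, wAug] at hfinw
    split_ifs at hfinw with hHk
    · exact Or.inr (Or.inr hHk)
    · simp only [hw_def] at hfinw
      split_ifs at hfinw with hcond
      · rcases hcond with hc | hc
        · exact Or.inr (Or.inl hc)
        · exfalso
          have := hstep k
          omega
      · simp at hfinw


end
end

section
/- Every weighted tree T on n vertices admits an exact 2-hopset with O(n log n) edges. Concretely: recursively choosing a centroid-type separator and connecting every vertex in each part to the separator vertices on its root path yields a 2-hopset H of T with |H| ≤ c · n log₂ n for an absolute constant c. -/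
/-!
If every `u`-`v` walk passes through `x`, then `d(u,x) + d(x,v) = d(u,v)`, so the shortcuts
`{u,x}` and `{x,v}` give an exact 2-hop route from `u` to `v`. In a forest, removing a
centroid from every component at least halves all component sizes, and joining each centroid to
all vertices of its component costs at most `n` pairs. Two vertices of a component either remain
connected after the removal, or every walk between them meets its centroid. After
`⌈log₂ n⌉` rounds all components are single vertices, so `n ⌈log₂ n⌉ ≤ 2 n log₂ n` pairs suffice.
-/

open scoped ENNReal

noncomputable section

section HopDistance

variable {V : Type*} (w : V → V → ℝ≥0∞)

lemma dLim_zero_self (u : V) : dLim w 0 u u = 0 := if_pos rfl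

lemma dLim_succ_le (h : ℕ) (u v : V) : dLim w (h + 1) u v ≤ dLim w h u v :=
  min_le_left _ _

lemma dLim_succ_le_add (h : ℕ) (u x v : V) :
    dLim w (h + 1) u v ≤ w u x + dLim w h x v :=
  (min_le_right _ _).trans (iInf_le _ x)

lemma dLim_one_le (u v : V) : dLim w 1 u v ≤ w u v :=
  (dLim_succ_le_add w 0 u v v).trans_eq (by rw [dLim_zero_self, add_zero])

lemma dLim_add_le (a b : ℕ) (u x v : V) :
    dLim w (a + b) u v ≤ dLim w a u x + dLim w b x v := by
  induction a generalizing u with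
  | zero =>
    rcases eq_or_ne u x with rfl | hux
    · simp [dLim_zero_self]
    · simp [dLim, hux]
  | succ a ih =>
    rw [Nat.add_right_comm, show dLim w (a + 1) u x = min _ _ from rfl, ← min_add_add_right,
      ENNReal.iInf_add]
    exact le_min ((dLim_succ_le w _ u v).trans (ih u)) (le_iInf fun y =>
      (dLim_succ_le_add w _ u y v).trans ((add_le_add le_rfl (ih y)).trans_eq (add_assoc ..).symm))

lemma gdist_le_dLim (h : ℕ) (u v : V) : gdist w u v ≤ dLim w h u v := iInf_le _ h

lemma gdist_self (u : V) : gdist w u u = 0 :=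
  nonpos_iff_eq_zero.1 ((gdist_le_dLim w 0 u u).trans_eq (dLim_zero_self w u))

lemma gdist_le (u v : V) : gdist w u v ≤ w u v :=
  (gdist_le_dLim w 1 u v).trans (dLim_one_le w u v)

lemma gdist_triangle (u x v : V) : gdist w u v ≤ gdist w u x + gdist w x v := by
  rw [gdist, gdist, ENNReal.iInf_add]
  refine le_iInf fun a => ?_
  rw [gdist, ENNReal.add_iInf]
  exact le_iInf fun b => (gdist_le_dLim w (a + b) u v).trans (dLim_add_le w a b u x v)

lemma le_gdist_of_potential {f : V → ℝ≥0∞} {v : V} (hfv : f v = 0)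
    (hf : ∀ a b, f a ≤ w a b + f b) (u : V) : f u ≤ gdist w u v := by
  refine le_iInf fun h => ?_
  induction h generalizing u with
  | zero =>
    rcases eq_or_ne u v with rfl | huv
    · simp [hfv]
    · simp [dLim, huv]
  | succ h ih => exact le_min (ih u) (le_iInf fun x => (hf u x).trans (add_le_add le_rfl (ih x)))

variable (H : V → V → Prop)

lemma gdist_le_wAug (u v : V) : gdist w u v ≤ wAug w H u v := by
  unfold wAug
  split_ifs
  exacts [le_min (gdist_le w u v) le_rfl, gdist_le w u v]

lemma wAug_le_gdist {u v : V} (huv : H u v) : wAug w H u v ≤ gdist w u v := by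
  rw [wAug, if_pos huv]
  exact min_le_right _ _

lemma gdist_le_dLim_wAug (h : ℕ) (u v : V) : gdist w u v ≤ dLim (wAug w H) h u v :=
  (le_gdist_of_potential (wAug w H) (f := fun a => gdist w a v) (gdist_self w v)
    (fun a b => (gdist_triangle w a b v).trans (add_le_add (gdist_le_wAug w H a b) le_rfl))
    u).trans (gdist_le_dLim _ h u v)

lemma dLim_wAug_one_le {u v : V} (huv : u = v ∨ H u v) :
    dLim (wAug w H) 1 u v ≤ gdist w u v := by
  rcases huv with rfl | huv
  · rw [gdist_self]
    exact (dLim_succ_le _ 0 u u).trans_eq (dLim_zero_self _ u)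
  · exact (dLim_one_le _ u v).trans (wAug_le_gdist w H huv)

lemma dLim_wAug_two_le {u x v : V} (hux : x = u ∨ H u x) (hxv : x = v ∨ H x v) :
    dLim (wAug w H) 2 u v ≤ gdist w u x + gdist w x v := by
  rcases hux with rfl | hux
  · rw [gdist_self, zero_add]
    exact (dLim_succ_le _ 1 x v).trans (dLim_wAug_one_le w H hxv)
  · exact (dLim_succ_le_add _ 1 u x v).trans
      (add_le_add (wAug_le_gdist w H hux) (dLim_wAug_one_le w H hxv))

end HopDistance

namespace SimpleGraph

open Finset

variable {V : Type*} {G : SimpleGraph V}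

def ReachableIn (G : SimpleGraph V) (s : Set V) (u v : V) : Prop :=
  ∃ W : G.Walk u v, ∀ z ∈ W.support, z ∈ s

namespace ReachableIn

variable {s t : Set V} {u v x : V}

lemma refl (hu : u ∈ s) : G.ReachableIn s u u := ⟨.nil, by simpa⟩

lemma left_mem (h : G.ReachableIn s u v) : u ∈ s :=
  h.elim fun W hW => hW u W.start_mem_support

lemma right_mem (h : G.ReachableIn s u v) : v ∈ s :=
  h.elim fun W hW => hW v W.end_mem_support

lemma symm (h : G.ReachableIn s u v) : G.ReachableIn s v u :=
  h.elim fun W hW => ⟨W.reverse, fun z hz => hW z (by simpa using hz)⟩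

lemma trans (h₁ : G.ReachableIn s u x) (h₂ : G.ReachableIn s x v) : G.ReachableIn s u v := by
  obtain ⟨W₁, hW₁⟩ := h₁
  obtain ⟨W₂, hW₂⟩ := h₂
  refine ⟨W₁.append W₂, fun z hz => ?_⟩
  rcases (Walk.mem_support_append_iff _ _).1 hz with hz | hz
  exacts [hW₁ z hz, hW₂ z hz]

lemma mono (hst : s ⊆ t) (h : G.ReachableIn s u v) : G.ReachableIn t u v :=
  h.elim fun W hW => ⟨W, fun z hz => hst (hW z hz)⟩

lemma adj_trans (hux : G.Adj u x) (hu : u ∈ s) (h : G.ReachableIn s x v) :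
    G.ReachableIn s u v :=
  h.elim fun W hW => ⟨.cons hux W, by simpa [hu] using hW⟩

lemma exists_adj (h : G.ReachableIn s u x) (hux : u ≠ x) :
    ∃ z, G.Adj z x ∧ G.ReachableIn (s \ {x}) u z := by
  obtain ⟨W, hW⟩ := h
  induction W with
  | nil => exact absurd rfl hux
  | @cons a y b hay W ih =>
    have ha : a ∈ s \ {b} := ⟨hW a (by simp), hux⟩
    rcases eq_or_ne y b with rfl | hyb
    · exact ⟨a, hay, refl ha⟩
    · obtain ⟨z, hzb, hyz⟩ := ih hyb fun z hz => hW z (by simp [hz])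
      exact ⟨z, hzb, hyz.adj_trans hay ha⟩

lemma diff_singleton_or (h : G.ReachableIn s u v) (hxv : x ≠ v) :
    G.ReachableIn (s \ {x}) u v ∨ G.ReachableIn (s \ {v}) u x := by
  obtain ⟨W, hW⟩ := h
  induction W with
  | nil => exact .inl (refl ⟨hW _ (by simp), hxv.symm⟩)
  | @cons a y b hay W ih =>
    have ha : a ∈ s := hW a (by simp)
    rcases eq_or_ne a x with rfl | hax
    · exact .inr (refl ⟨ha, hxv⟩)
    rcases eq_or_ne a b with rfl | hab
    · exact .inl (refl ⟨ha, hax⟩)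
    rcases ih hxv fun z hz => hW z (by simp [hz]) with h | h
    · exact .inl (h.adj_trans hay ⟨ha, hax⟩)
    · exact .inr (h.adj_trans hay ⟨ha, hab⟩)

end ReachableIn

lemma IsAcyclic.support_subset_of_isPath (hG : G.IsAcyclic) {u v : V} {P : G.Walk u v}
    (hP : P.IsPath) (W : G.Walk u v) : P.support ⊆ W.support := by
  classical
  have : (⟨P, hP⟩ : G.Path u v) = ⟨W.bypass, W.bypass_isPath⟩ :=
    (hG.subsingleton_path u v).elim _ _
  rw [show P = W.bypass from congrArg Subtype.val this]
  exact W.support_bypass_subset_support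

lemma IsAcyclic.reachableIn_inter (hG : G.IsAcyclic) {s t : Set V} {u v : V}
    (hs : G.ReachableIn s u v) (ht : G.ReachableIn t u v) : G.ReachableIn (s ∩ t) u v := by
  classical
  obtain ⟨W₁, hW₁⟩ := hs
  obtain ⟨W₂, hW₂⟩ := ht
  exact ⟨W₁.bypass, fun z hz => ⟨hW₁ z (W₁.support_bypass_subset_support hz),
    hW₂ z (hG.support_subset_of_isPath W₁.bypass_isPath W₂ hz)⟩⟩

lemma IsAcyclic.not_reachableIn_of_adj (hG : G.IsAcyclic) {s t : Set V} {q z x : V}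
    (hzx : G.Adj z x) (hx : x ∉ s) (hz : z ∉ t)
    (hqz : G.ReachableIn s q z) (hqx : G.ReachableIn t q x) : False := by
  classical
  obtain ⟨W₁, hW₁⟩ := hqz
  obtain ⟨W₂, hW₂⟩ := hqx
  have hP : (W₁.bypass.concat hzx).IsPath :=
    W₁.bypass_isPath.concat (fun h => hx (hW₁ x (W₁.support_bypass_subset_support h))) hzx
  exact hz (hW₂ z (hG.support_subset_of_isPath hP W₂ (by simp)))

open Classical in
/-- The component of `y` in `G[S]`; empty when `y ∉ S`. -/
noncomputable def compIn (G : SimpleGraph V) (S : Finset V) (y : V) : Finset V :=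
  S.filter fun z => G.ReachableIn S y z

lemma mem_compIn {S : Finset V} {y z : V} : z ∈ G.compIn S y ↔ G.ReachableIn S y z := by
  simp only [compIn, mem_filter]
  exact ⟨And.right, fun h => ⟨h.right_mem, h⟩⟩

lemma compIn_subset (S : Finset V) (y : V) : G.compIn S y ⊆ S :=
  fun _ h => (mem_compIn.1 h).right_mem

lemma compIn_eq_of_mem {S : Finset V} {y z : V} (h : z ∈ G.compIn S y) :
    G.compIn S z = G.compIn S y := by
  ext q
  simp only [mem_compIn]
  exact ⟨(mem_compIn.1 h).trans, (mem_compIn.1 h).symm.trans⟩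

lemma ReachableIn.compIn {S : Finset V} {y z : V} (h : G.ReachableIn S y z) :
    G.ReachableIn (G.compIn S y) y z := by
  classical
  obtain ⟨W, hW⟩ := h
  exact ⟨W, fun q hq => mem_compIn.2
    ⟨W.takeUntil q hq, fun p hp => hW p (W.support_takeUntil_subset_support hq hp)⟩⟩

lemma reachableIn_compIn_of_mem {S : Finset V} {y a b : V} (ha : a ∈ G.compIn S y)
    (hb : b ∈ G.compIn S y) : G.ReachableIn (G.compIn S y) a b := by
  rw [← compIn_eq_of_mem ha]
  exact ((mem_compIn.1 ha).symm.trans (mem_compIn.1 hb)).compIn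

lemma compIn_subset_compIn {S T : Finset V} {y : V} (h : G.compIn S y ⊆ T) :
    G.compIn S y ⊆ G.compIn T y :=
  fun _ hq => mem_compIn.2 ((mem_compIn.1 hq).compIn.mono (coe_subset.2 h))

variable [DecidableEq V]

/-- Of the components of `C - z`, the one containing `x` is disjoint from `D`, the component
of `z` in `C - x`, and the others lie in `D - z`. -/
lemma IsAcyclic.card_compIn_erase_lt (hG : G.IsAcyclic) {C : Finset V}
    (hconn : ∀ a ∈ C, ∀ b ∈ C, G.ReachableIn C a b) {x z : V} (hz : z ∈ C)
    (hzx : G.Adj z x) (hbig : #C < 2 * #(G.compIn (C.erase x) z)) (e : V) :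
    #(G.compIn (C.erase z) e) < #(G.compIn (C.erase x) z) := by
  set D := G.compIn (C.erase x) z
  set E := G.compIn (C.erase z) e
  have hzD : z ∈ D := mem_compIn.2 (.refl (by simpa [hz] using hzx.ne))
  by_cases hxE : x ∈ E
  · have hdisj : Disjoint E D := Finset.disjoint_left.2 fun q hqE hqD =>
      hG.not_reachableIn_of_adj (s := ↑(C.erase x)) (t := ↑(C.erase z)) hzx (by simp)
        (by simp) (mem_compIn.1 hqD).symm ((mem_compIn.1 hqE).symm.trans (mem_compIn.1 hxE))
    have hunion : #(E ∪ D) ≤ #C := card_le_card <| union_subset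
      ((compIn_subset _ _).trans (erase_subset _ _)) ((compIn_subset _ _).trans (erase_subset _ _))
    rw [card_union_of_disjoint hdisj] at hunion
    omega
  · have hED : E ⊆ D.erase z := fun q hq => by
      have hq' := mem_erase.1 (compIn_subset _ _ hq)
      refine mem_erase.2 ⟨hq'.1, ?_⟩
      rcases (hconn q hq'.2 z hz).diff_singleton_or hzx.ne' with h | h
      · exact mem_compIn.2 (by simpa using h.symm)
      · exact absurd (mem_compIn.2 ((mem_compIn.1 hq).trans (by simpa using h))) hxE
    exact (card_le_card hED).trans_lt (card_erase_lt_of_mem hzD)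

/-- A vertex minimising the size of the largest component left after its removal is a
centroid. -/
lemma IsAcyclic.exists_centroid (hG : G.IsAcyclic) {C : Finset V} (hC : C.Nonempty)
    (hconn : ∀ a ∈ C, ∀ b ∈ C, G.ReachableIn C a b) :
    ∃ x ∈ C, ∀ y, 2 * #(G.compIn (C.erase x) y) ≤ #C := by
  obtain ⟨x, hxC, hmin⟩ :=
    C.exists_min_image (fun x => C.sup fun y => #(G.compIn (C.erase x) y)) hC
  refine ⟨x, hxC, fun y => ?_⟩
  by_contra! hbig
  obtain ⟨q, hq⟩ : (G.compIn (C.erase x) y).Nonempty := card_pos.1 (by omega)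
  have hy : y ∈ C.erase x := (mem_compIn.1 hq).left_mem
  obtain ⟨z, hzx, hyz⟩ := (hconn y (mem_of_mem_erase hy) x hxC).exists_adj (ne_of_mem_erase hy)
  rw [← compIn_eq_of_mem (mem_compIn.2 (by simpa using hyz))] at hbig
  have hz : z ∈ C := hyz.right_mem.1
  have hlt : (C.sup fun e => #(G.compIn (C.erase z) e)) < #(G.compIn (C.erase x) z) :=
    (Finset.sup_lt_iff (Nat.bot_eq_zero ▸ by omega)).2 fun e _ =>
      hG.card_compIn_erase_lt hconn hz hzx hbig e
  have hle : #(G.compIn (C.erase x) z) ≤ C.sup fun e => #(G.compIn (C.erase x) e) :=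
    le_sup (f := fun e => #(G.compIn (C.erase x) e)) hz
  exact absurd (hmin z hz) (by omega)

lemma IsAcyclic.exists_centroid_choice (hG : G.IsAcyclic) (S : Finset V) :
    ∃ c : V → V, (∀ y ∈ S, ∀ z ∈ G.compIn S y, c z = c y) ∧
      ∀ y ∈ S, ∀ z, 2 * #(G.compIn ((G.compIn S y).erase (c y)) z) ≤ #(G.compIn S y) := by
  rcases isEmpty_or_nonempty V with hV | hV
  · exact ⟨id, fun y => isEmptyElim y, fun y => isEmptyElim y⟩
  have hcent : ∀ C ∈ S.image (G.compIn S),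
      ∃ x ∈ C, ∀ z, 2 * #(G.compIn (C.erase x) z) ≤ #C := by
    intro C hC
    obtain ⟨y, hy, rfl⟩ := mem_image.1 hC
    exact hG.exists_centroid ⟨y, mem_compIn.2 (.refl hy)⟩
      fun a ha b hb => reachableIn_compIn_of_mem ha hb
  choose! cent _ hsmall using hcent
  exact ⟨fun y => cent (G.compIn S y), fun y _ z hz => congrArg cent (compIn_eq_of_mem hz),
    fun y hy => hsmall _ (mem_image_of_mem _ hy)⟩

section CentroidRound

variable {S : Finset V} {c : V → V}

lemma compIn_filter_subset_erase (hc : ∀ y ∈ S, ∀ z ∈ G.compIn S y, c z = c y) (y : V) :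
    G.compIn (S.filter fun q => c q ≠ q) y ⊆ (G.compIn S y).erase (c y) := fun q hq => by
  have hyq := mem_compIn.1 hq
  have hqS : q ∈ G.compIn S y := mem_compIn.2 (hyq.mono (coe_subset.2 (filter_subset _ _)))
  refine mem_erase.2 ⟨fun hqc => (mem_filter.1 hyq.right_mem).2 ?_, hqS⟩
  rw [hc y (mem_filter.1 hyq.left_mem).1 q hqS, hqc]

lemma ReachableIn.filter_of_erase (hc : ∀ y ∈ S, ∀ z ∈ G.compIn S y, c z = c y) {u v : V}
    (hu : u ∈ S) (huv : G.ReachableIn ↑(S.erase (c u)) u v) :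
    G.ReachableIn ↑(S.filter fun q => c q ≠ q) u v := by
  refine huv.compIn.mono fun q hq => ?_
  have huq := mem_compIn.1 hq
  obtain ⟨hqc, hqS⟩ := mem_erase.1 huq.right_mem
  refine mem_filter.2 ⟨hqS, ?_⟩
  rw [hc u hu q (mem_compIn.2 (huq.mono (coe_subset.2 (erase_subset _ _))))]
  exact hqc.symm

end CentroidRound

theorem IsAcyclic.exists_star_cover (hG : G.IsAcyclic) (k : ℕ) (S : Finset V)
    (hS : ∀ y, #(G.compIn S y) ≤ 2 ^ k) :
    ∃ HS : Finset (Sym2 V), #HS ≤ k * #S ∧ ∀ u v, G.ReachableIn S u v →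
      ∃ x, ¬ G.ReachableIn {x}ᶜ u v ∧ (x = u ∨ s(u, x) ∈ HS) ∧ (x = v ∨ s(x, v) ∈ HS) := by
  induction k generalizing S with
  | zero =>
    refine ⟨∅, by simp, fun u v huv => ⟨u, fun h => h.left_mem rfl, .inl rfl, .inl ?_⟩⟩
    exact card_le_one.1 (hS u) _ (mem_compIn.2 (.refl huv.left_mem)) _ (mem_compIn.2 huv)
  | succ k ih =>
    obtain ⟨c, hc, hc_small⟩ := hG.exists_centroid_choice S
    have hS' (y : V) : #(G.compIn (S.filter fun q => c q ≠ q) y) ≤ 2 ^ k := by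
      rcases (G.compIn (S.filter fun q => c q ≠ q) y).eq_empty_or_nonempty with h | ⟨q, hq⟩
      · simp [h]
      have := card_le_card (compIn_subset_compIn (compIn_filter_subset_erase hc y))
      have := hc_small y (mem_filter.1 (mem_compIn.1 hq).left_mem).1 y
      have := hS y
      rw [pow_succ] at this
      omega
    obtain ⟨HS', hcard', hcov'⟩ := ih _ hS'
    refine ⟨HS' ∪ S.image fun y => s(c y, y), ?_, fun u v huv => ?_⟩
    · have : k * #(S.filter fun q => c q ≠ q) ≤ k * #S :=
        Nat.mul_le_mul_left k (card_filter_le _ _)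
      calc #(HS' ∪ S.image fun y => s(c y, y)) ≤ #HS' + #S :=
            (card_union_le _ _).trans (add_le_add le_rfl card_image_le)
        _ ≤ (k + 1) * #S := by rw [add_mul, one_mul]; omega
    by_cases h' : G.ReachableIn ↑(S.filter fun q => c q ≠ q) u v
    · obtain ⟨x, hsep, hux, hxv⟩ := hcov' u v h'
      exact ⟨x, hsep, hux.imp_right (mem_union_left _), hxv.imp_right (mem_union_left _)⟩
    have hu := huv.left_mem
    have hcv : c v = c u := hc u hu v (mem_compIn.2 huv)
    refine ⟨c u, fun hsep => h' ?_, .inr (mem_union_right _ (mem_image.2 ⟨u, hu, Sym2.eq_swap⟩)),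
      .inr (mem_union_right _ (mem_image.2 ⟨v, huv.right_mem, by rw [hcv]⟩))⟩
    exact ReachableIn.filter_of_erase hc hu (by
      simpa [Set.sdiff_eq] using hG.reachableIn_inter huv hsep)

end SimpleGraph

open SimpleGraph

/-- The potential `f` below is the distance to `v` on `v`'s side of `x`, and the length of the
detour through `x` elsewhere. -/
lemma gdist_add_gdist_le_of_not_reachableIn {V : Type*} (w : V → V → ℝ≥0∞)
    {G : SimpleGraph V} (hw : ∀ a b, a ≠ b → w a b ≠ ⊤ → G.Adj a b) {u x v : V}
    (hsep : ¬ G.ReachableIn {x}ᶜ u v) : gdist w u x + gdist w x v ≤ gdist w u v := by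
  classical
  set f : V → ℝ≥0∞ := fun a =>
    if G.ReachableIn {x}ᶜ a v then gdist w a v else gdist w a x + gdist w x v with hf_def
  have hf_ge (a : V) : gdist w a v ≤ f a := by
    simp only [hf_def]
    split_ifs
    exacts [le_rfl, gdist_triangle w a x v]
  have hfv : f v = 0 := by
    by_cases hvx : v = x
    · subst hvx
      simp [hf_def, gdist_self]
    · simp [hf_def, ReachableIn.refl (G := G) (s := {x}ᶜ) hvx, gdist_self]
  have hf (a b : V) : f a ≤ w a b + f b := by
    rcases eq_or_ne a b with rfl | hab
    · exact le_add_self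
    by_cases hwab : w a b = ⊤
    · simp [hwab]
    have hadj := hw a b hab hwab
    by_cases ha : G.ReachableIn {x}ᶜ a v
    · calc f a = gdist w a v := if_pos ha
        _ ≤ gdist w a b + gdist w b v := gdist_triangle w a b v
        _ ≤ w a b + f b := add_le_add (gdist_le w a b) (hf_ge b)
    by_cases hb : G.ReachableIn {x}ᶜ b v
    · obtain rfl : a = x := by_contra fun hax => ha (hb.adj_trans hadj hax)
      calc f a = gdist w a v := by simp [hf_def, ha, gdist_self]
        _ ≤ gdist w a b + gdist w b v := gdist_triangle w a b v
        _ ≤ w a b + f b := add_le_add (gdist_le w a b) (hf_ge b)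
    · calc f a = gdist w a x + gdist w x v := if_neg ha
        _ ≤ w a b + gdist w b x + gdist w x v :=
          add_le_add ((gdist_triangle w a b x).trans (add_le_add (gdist_le w a b) le_rfl)) le_rfl
        _ = w a b + f b := by simp only [hf_def, if_neg hb, add_assoc]
  calc gdist w u x + gdist w x v = f u := (if_neg hsep).symm
    _ ≤ gdist w u v := le_gdist_of_potential w hfv hf u

lemma isHopset_two_of_forall_separator {V : Type*} (w : V → V → ℝ≥0∞) {G : SimpleGraph V}
    (hw : ∀ a b, a ≠ b → w a b ≠ ⊤ → G.Adj a b) {H : V → V → Prop}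
    (hH : ∀ u v, ∃ x, ¬ G.ReachableIn {x}ᶜ u v ∧ (x = u ∨ H u x) ∧ (x = v ∨ H x v)) :
    IsHopset w H 2 := fun u v =>
  let ⟨_, hsep, hux, hxv⟩ := hH u v
  le_antisymm
    ((dLim_wAug_two_le w H hux hxv).trans (gdist_add_gdist_le_of_not_reachableIn w hw hsep))
    (gdist_le_dLim_wAug w H 2 u v)

lemma Nat.clog_two_le_two_mul_logb (n : ℕ) : (Nat.clog 2 n : ℝ) ≤ 2 * Real.logb 2 n := by
  have hlog : 0 ≤ Real.logb 2 n := (Nat.cast_nonneg _).trans (Real.natLog_le_logb n 2)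
  rcases le_or_gt n 1 with hn | hn
  · rw [Nat.clog_of_right_le_one hn]
    simpa using hlog
  have h1 : (1 : ℝ) ≤ Real.logb 2 n :=
    (Nat.one_le_cast.2 (Nat.log_pos one_lt_two hn)).trans (Real.natLog_le_logb n 2)
  have h2 : (Nat.clog 2 n : ℝ) < Real.logb 2 n + 1 := by
    rw [← Real.natCeil_logb_natCast]
    exact_mod_cast Nat.ceil_lt_add_one hlog
  linarith

/-- Every weighted tree on `n` vertices admits an exact 2-hopset with at most
`c · n · log₂ n` edges, for an absolute constant `c > 0`. -/
theorem stmt15 :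
    ∃ c : ℝ, 0 < c ∧
      ∀ (V : Type) (_ : Fintype V) (G : SimpleGraph V), G.IsTree →
        ∀ w : V → V → ℝ≥0∞,
          (∀ u v : V, w u v = w v u) →
          (∀ u v : V, u ≠ v → 0 < w u v) →
          (∀ u v : V, u ≠ v → (w u v ≠ ⊤ ↔ G.Adj u v)) →
          ∃ HS : Finset (Sym2 V),
            IsHopset w (fun x y => s(x, y) ∈ HS) 2 ∧
            (HS.card : ℝ) ≤ c * (Fintype.card V : ℝ) * Real.logb 2 (Fintype.card V) := by
  refine ⟨2, two_pos, fun V _ G hG w _ _ hw => ?_⟩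
  classical
  obtain ⟨HS, hcard, hcov⟩ := hG.isAcyclic.exists_star_cover (Nat.clog 2 (Fintype.card V))
    Finset.univ fun y => (Finset.card_le_univ _).trans (Nat.le_pow_clog one_lt_two _)
  refine ⟨HS, isHopset_two_of_forall_separator w (fun a b hab h => (hw a b hab).1 h)
    fun u v => hcov u v ?_, ?_⟩
  · obtain ⟨W⟩ := hG.connected.preconnected u v
    exact ⟨W, fun z _ => Finset.mem_coe.2 (Finset.mem_univ z)⟩
  · rw [Finset.card_univ] at hcard
    calc (HS.card : ℝ) ≤ Nat.clog 2 (Fintype.card V) * Fintype.card V := by exact_mod_cast hcard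
      _ ≤ 2 * Fintype.card V * Real.logb 2 (Fintype.card V) := by
        nlinarith [Nat.clog_two_le_two_mul_logb (Fintype.card V),
          (Nat.cast_nonneg (Fintype.card V) : (0 : ℝ) ≤ _)]

end
end
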